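/- Let H be a strongly primary monoid. For every atom u ∈ H, the local tame degree satisfies t(u) ≤ ρ_{ω(u)}(H). Hence, if ρ_{ω(u)}(H) < ∞ for every atom u ∈ H, then H is locally tame. -/

import Mathlib

open Pointwise

section MonoidDefs

variable {G : Type*} [CommGroup G]

/-- `x` is a unit of the submonoid `H`. -/
def IsHUnit (H : Submonoid G) (x : G) : Prop := x ∈ H ∧ x⁻¹ ∈ H

/-- The set of non-units of `H`. -/
def nonUnits (H : Submonoid G) : Set G := {x | x ∈ H ∧ x⁻¹ ∉ H}

/-- `u` is an atom (irreducible element) of `H`. -/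
def IsHAtom (H : Submonoid G) (u : G) : Prop :=
  u ∈ H ∧ ¬ IsHUnit H u ∧
    ∀ a b : G, a ∈ H → b ∈ H → u = a * b → IsHUnit H a ∨ IsHUnit H b

/-- `G` is the quotient group of `H`. -/
def IsQuotientGroup (H : Submonoid G) : Prop :=
  ∀ g : G, ∃ a ∈ H, ∃ b ∈ H, g = a / b

/-- `H` is a primary monoid. -/
def IsPrimaryMonoid (H : Submonoid G) : Prop :=
  (nonUnits H).Nonempty ∧
    ∀ a ∈ nonUnits H, ∀ b ∈ nonUnits H, ∃ n : ℕ, 0 < n ∧ b ^ n ∈ a • (H : Set G)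

/-- `H` is a strongly primary monoid. -/
def IsStronglyPrimary (H : Submonoid G) : Prop :=
  (nonUnits H).Nonempty ∧
    ∀ a ∈ nonUnits H, ∃ n : ℕ, 0 < n ∧ nonUnits H ^ n ⊆ a • (H : Set G)

/-- `x` and `y` are associated in `H`. -/
def HAssoc (H : Submonoid G) (x y : G) : Prop := IsHUnit H (x / y)

/-- The set of lengths of `a`: all `k` such that `a` is a product of `k` atoms
(up to a unit of `H`). -/
def lengthSet (H : Submonoid G) (a : G) : Set ℕ :=
  {k | ∃ s : Multiset G, Multiset.card s = k ∧ (∀ v ∈ s, IsHAtom H v) ∧ HAssoc H a s.prod}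

/-- `Λ(S)`, the supremum of the minimal factorization lengths of elements of `S`. -/
noncomputable def Lambda (H : Submonoid G) (S : Set G) : ℕ∞ :=
  ⨆ (a : G) (_ : a ∈ S) (_ : (lengthSet H a).Nonempty), ((sInf (lengthSet H a) : ℕ) : ℕ∞)

/-- `ρ_k(H)`, the supremum of `sup L(a)` over all `a` with `k ∈ L(a)`. -/
noncomputable def rho (H : Submonoid G) (k : ℕ∞) : ℕ∞ :=
  ⨆ (a : G) (_ : a ∈ H) (_ : ∃ n ∈ lengthSet H a, (n : ℕ∞) = k),
    ⨆ (n : ℕ) (_ : n ∈ lengthSet H a), (n : ℕ∞)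

/-- The elasticity `ρ(H) = sup { m/n : m, n ∈ L(a), a ∈ H }`. -/
noncomputable def elasticity (H : Submonoid G) : ENNReal :=
  ⨆ (a : G) (_ : a ∈ H) (m : ℕ) (_ : m ∈ lengthSet H a) (n : ℕ) (_ : n ∈ lengthSet H a),
    (m : ENNReal) / (n : ENNReal)

/-- `z` is a factorization of `a`: a multiset of atoms whose product is associated to `a`. -/
def IsFactorization (H : Submonoid G) (a : G) (z : Multiset G) : Prop :=
  (∀ v ∈ z, IsHAtom H v) ∧ HAssoc H a z.prod

/-- The distance between two factorizations: cancel a (maximal) common part (up to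
associates) and take the maximum of the lengths of the remaining parts. -/
noncomputable def fdist (H : Submonoid G) (z z' : Multiset G) : ℕ :=
  sInf {N : ℕ | ∃ x x' v w : Multiset G, z = x + v ∧ z' = x' + w ∧
    Multiset.Rel (HAssoc H) x x' ∧ max (Multiset.card v) (Multiset.card w) ≤ N}

/-- `N` is a tame bound for the atom `u`: for every multiple `a` of `u` and every
factorization `z` of `a` there is a factorization `z'` of `a` containing `u`
with `d(z, z') ≤ N`. -/
def TameBound (H : Submonoid G) (u : G) (N : ℕ) : Prop :=
  ∀ a ∈ H, (∃ b ∈ H, a = u * b) → ∀ z : Multiset G, IsFactorization H a z →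
    ∃ z' : Multiset G, IsFactorization H a z' ∧ (∃ v ∈ z', HAssoc H v u) ∧ fdist H z z' ≤ N

/-- `H` is locally tame: `t(u) < ∞` for every atom `u`. -/
def LocallyTame (H : Submonoid G) : Prop :=
  ∀ u : G, IsHAtom H u → ∃ N : ℕ, TameBound H u N

/-- `H` is globally tame: `sup { t(u) : u an atom } < ∞`. -/
def GloballyTame (H : Submonoid G) : Prop :=
  ∃ N : ℕ, ∀ u : G, IsHAtom H u → TameBound H u N

/-- The local tame degree `t(u)` of `u`. -/
noncomputable def tameDeg (H : Submonoid G) (u : G) : ℕ∞ :=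
  sInf {N : ℕ∞ | ∃ n : ℕ, TameBound H u n ∧ N = (n : ℕ∞)}

/-- `N` is an omega bound for `a`: whenever `a` divides a product of elements of `H`,
it divides a subproduct with at most `N` factors. -/
def OmegaBound (H : Submonoid G) (a : G) (N : ℕ) : Prop :=
  ∀ s : Multiset G, (∀ x ∈ s, x ∈ H) → (∃ c ∈ H, s.prod = a * c) →
    ∃ t : Multiset G, t ≤ s ∧ Multiset.card t ≤ N ∧ ∃ c ∈ H, t.prod = a * c

/-- The omega invariant `ω(a)`. -/
noncomputable def omegaDeg (H : Submonoid G) (a : G) : ℕ∞ :=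
  sInf {N : ℕ∞ | ∃ n : ℕ, OmegaBound H a n ∧ N = (n : ℕ∞)}

/-- `M(x)`: the smallest `n ≥ 1` with `mⁿ ⊆ xH`. -/
noncomputable def Mdeg (H : Submonoid G) (x : G) : ℕ :=
  sInf {n : ℕ | 0 < n ∧ nonUnits H ^ n ⊆ x • (H : Set G)}

/-- The complete integral closure `Ĥ` of `H` (inside the quotient group). -/
def hatH (H : Submonoid G) : Set G := {x | ∃ c ∈ H, ∀ n : ℕ, c * x ^ n ∈ H}

/-- The set of non-units of `Ĥ`. -/
def hatNonUnits (H : Submonoid G) : Set G := {x | x ∈ hatH H ∧ x⁻¹ ∉ hatH H}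

/-- The root closure `H̃` of `H`. -/
def tildeH (H : Submonoid G) : Set G := {x | ∃ n : ℕ, 0 < n ∧ x ^ n ∈ H}

/-- The set of non-units of `H̃`. -/
def tildeNonUnits (H : Submonoid G) : Set G := {x | x ∈ tildeH H ∧ x⁻¹ ∉ tildeH H}

/-- The seminormal closure `H'` of `H`. -/
def seminormalClosure (H : Submonoid G) : Set G :=
  {x | ∃ N : ℕ, ∀ n : ℕ, N ≤ n → x ^ n ∈ H}

/-- The conductor `(H : Ĥ)`. -/
def conductorH (H : Submonoid G) : Set G := {z | ∀ x ∈ hatH H, z * x ∈ H}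

/-- `Ĥ` is a primary monoid. -/
def HatPrimary (H : Submonoid G) : Prop :=
  (hatNonUnits H).Nonempty ∧
    ∀ a ∈ hatNonUnits H, ∀ b ∈ hatNonUnits H,
      ∃ n : ℕ, 0 < n ∧ ∃ c ∈ hatH H, b ^ n = a * c

/-- `Ĥ` is a valuation monoid. -/
def HatValuation (H : Submonoid G) : Prop :=
  ∀ a ∈ hatH H, ∀ b ∈ hatH H,
    (∃ c ∈ hatH H, b = a * c) ∨ (∃ c ∈ hatH H, a = b * c)

/-- `H` is atomic. -/
def Atomic (H : Submonoid G) : Prop :=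
  ∀ a ∈ nonUnits H, ∃ s : Multiset G, (∀ v ∈ s, IsHAtom H v) ∧ a = s.prod

/-- `H` is a discrete valuation monoid, i.e. `H_red ≅ (ℕ₀, +)`. -/
def IsDiscreteValuationMonoid (H : Submonoid G) : Prop :=
  ∃ p ∈ H, ¬ IsHUnit H p ∧ ∀ a ∈ H, ∃ n : ℕ, ∃ ε : G, IsHUnit H ε ∧ a = ε * p ^ n

end MonoidDefs

/-! A strongly primary monoid has, for each non-unit `a`, an exponent `n` such that every product
of `n` non-units is divisible by `a`. This bounds the number of non-unit factors of any element
(so `H` is atomic) and shows that `ω(a) ≤ n` is finite.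

For the tame degree, let `z` factor a multiple of the atom `u`. Some subproduct `t` of at most
`ω = ω(u)` atoms of `z` equals `u c`; factor `c` as `z_c`. The element `t u^(ω - |t|)` has the
factorization `t u^(ω - |t|)` of length `ω` and the factorization `u z_c u^(ω - |t|)`, so
`1 + |z_c| ≤ ρ_ω(H)`, and also `|t| ≤ ω ≤ ρ_ω(H)`. Replacing `t` by `u z_c` inside `z` gives a
factorization containing `u` at distance at most `max(|t|, 1 + |z_c|) ≤ ρ_ω(H)` from `z`. -/

theorem Multiset.exists_le_card_eq_of_le {α : Type*} {s : Multiset α} {n : ℕ}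
    (h : n ≤ Multiset.card s) : ∃ t ≤ s, Multiset.card t = n := by
  obtain ⟨t, ht⟩ := Multiset.card_pos_iff_exists_mem.mp
    (by rw [Multiset.card_powersetCard]; exact Nat.choose_pos h)
  exact ⟨t, Multiset.mem_powersetCard.mp ht⟩

theorem Multiset.prod_mem_pow_card {M : Type*} [CommMonoid M] {S : Set M} {s : Multiset M}
    (h : ∀ x ∈ s, x ∈ S) : s.prod ∈ S ^ Multiset.card s := by
  simpa [Multiset.map_const', Multiset.prod_replicate] using
    Set.multiset_prod_mem_multiset_prod s (fun _ ↦ S) id h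

theorem sInf_setOf_natCast_eq_find {P : ℕ → Prop} [DecidablePred P] (h : ∃ n, P n) :
    sInf {N : ℕ∞ | ∃ n, P n ∧ N = n} = Nat.find h := by
  refine le_antisymm (sInf_le ⟨_, Nat.find_spec h, rfl⟩) (le_sInf ?_)
  rintro _ ⟨n, hn, rfl⟩
  exact_mod_cast Nat.find_min' h hn

theorem exists_of_sInf_setOf_natCast_ne_top {P : ℕ → Prop}
    (h : sInf {N : ℕ∞ | ∃ n, P n ∧ N = n} ≠ ⊤) : ∃ n, P n := by
  by_contra! hP
  refine h (sInf_eq_top.mpr ?_)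
  rintro _ ⟨n, hn, -⟩
  exact absurd hn (hP n)

section SubmonoidOfCommGroup

variable {G : Type*} [CommGroup G] {H : Submonoid G}

theorem isHUnit_one : IsHUnit H 1 := ⟨H.one_mem, by simp⟩

theorem IsHUnit.mul {a b : G} (ha : IsHUnit H a) (hb : IsHUnit H b) : IsHUnit H (a * b) :=
  ⟨H.mul_mem ha.1 hb.1, by rw [mul_inv]; exact H.mul_mem ha.2 hb.2⟩

theorem isHUnit_multiset_prod {s : Multiset G} (h : ∀ x ∈ s, IsHUnit H x) :
    IsHUnit H s.prod := by
  induction s using Multiset.induction_on with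
  | empty => simpa using isHUnit_one
  | cons a s ih =>
    rw [Multiset.prod_cons]
    exact (h a (s.mem_cons_self a)).mul (ih fun x hx ↦ h x (Multiset.mem_cons_of_mem hx))

theorem HAssoc.refl (a : G) : HAssoc H a a := by
  simpa [HAssoc] using isHUnit_one

theorem HAssoc.trans {a b c : G} (hab : HAssoc H a b) (hbc : HAssoc H b c) : HAssoc H a c := by
  simpa [HAssoc] using hab.mul hbc

theorem HAssoc.mul {a b c d : G} (hab : HAssoc H a b) (hcd : HAssoc H c d) :
    HAssoc H (a * c) (b * d) := by
  rw [HAssoc, mul_div_mul_comm]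
  exact IsHUnit.mul hab hcd

theorem HAssoc.mem {a b : G} (hab : HAssoc H a b) (hb : b ∈ H) : a ∈ H := by
  simpa using H.mul_mem hab.1 hb

theorem mem_nonUnits_of_not_isHUnit {a : G} (ha : a ∈ H) (hna : ¬ IsHUnit H a) :
    a ∈ nonUnits H :=
  ⟨ha, fun h ↦ hna ⟨ha, h⟩⟩

theorem one_notMem_nonUnits : (1 : G) ∉ nonUnits H := fun h ↦ h.2 isHUnit_one.2

theorem mul_mem_nonUnits {a b : G} (ha : a ∈ nonUnits H) (hb : b ∈ H) : a * b ∈ nonUnits H :=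
  ⟨H.mul_mem ha.1 hb, fun h ↦ ha.2 (by simpa [mul_inv_cancel_right] using H.mul_mem h hb)⟩

theorem multiset_prod_mem_nonUnits {s : Multiset G} (hs : ∀ x ∈ s, x ∈ nonUnits H)
    (hne : s ≠ 0) : s.prod ∈ nonUnits H := by
  classical
  obtain ⟨x, hx⟩ := Multiset.exists_mem_of_ne_zero hne
  rw [← Multiset.cons_erase hx, Multiset.prod_cons]
  exact mul_mem_nonUnits (hs x hx) <| H.multiset_prod_mem _ fun y hy ↦
    (hs y (Multiset.mem_of_le (s.erase_le x) hy)).1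

theorem exists_mul_eq_of_not_isHAtom {a : G} (ha : a ∈ nonUnits H) (hna : ¬ IsHAtom H a) :
    ∃ b ∈ nonUnits H, ∃ c ∈ nonUnits H, a = b * c := by
  simp only [IsHAtom, ha.1, true_and, not_and, not_forall, not_or] at hna
  obtain ⟨b, c, hb, hc, rfl, hbu, hcu⟩ := hna fun h ↦ ha.2 h.2
  exact ⟨b, mem_nonUnits_of_not_isHUnit hb hbu, c, mem_nonUnits_of_not_isHUnit hc hcu, rfl⟩

theorem IsHAtom.mem_nonUnits {u : G} (hu : IsHAtom H u) : u ∈ nonUnits H :=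
  mem_nonUnits_of_not_isHUnit hu.1 hu.2.1

theorem IsFactorization.mem {a : G} {z : Multiset G} (h : IsFactorization H a z) : a ∈ H :=
  h.2.mem (H.multiset_prod_mem _ fun v hv ↦ (h.1 v hv).1)

theorem IsFactorization.add {a b : G} {z w : Multiset G} (ha : IsFactorization H a z)
    (hb : IsFactorization H b w) : IsFactorization H (a * b) (z + w) := by
  refine ⟨fun v hv ↦ ?_, by simpa only [Multiset.prod_add] using ha.2.mul hb.2⟩
  rcases Multiset.mem_add.mp hv with hv | hv
  exacts [ha.1 v hv, hb.1 v hv]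

theorem IsFactorization.of_hAssoc {a b : G} {z : Multiset G} (hab : HAssoc H a b)
    (hb : IsFactorization H b z) : IsFactorization H a z :=
  ⟨hb.1, hab.trans hb.2⟩

theorem isFactorization_prod {z : Multiset G} (hz : ∀ v ∈ z, IsHAtom H v) :
    IsFactorization H z.prod z :=
  ⟨hz, HAssoc.refl _⟩

theorem IsHAtom.isFactorization_singleton {u : G} (hu : IsHAtom H u) :
    IsFactorization H u {u} := by
  simpa using isFactorization_prod (H := H) (z := {u}) (by simpa using hu)

theorem isFactorization_replicate {u : G} (hu : IsHAtom H u) (n : ℕ) :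
    IsFactorization H (u ^ n) (Multiset.replicate n u) := by
  simpa using isFactorization_prod (H := H) fun v hv ↦ Multiset.eq_of_mem_replicate hv ▸ hu

theorem card_le_rho {a : G} {z z' : Multiset G} (hz : IsFactorization H a z)
    (hz' : IsFactorization H a z') :
    (Multiset.card z : ℕ∞) ≤ rho H (Multiset.card z') :=
  le_iSup_of_le a <| le_iSup_of_le hz.mem <| le_iSup_of_le ⟨_, ⟨z', rfl, hz'⟩, rfl⟩ <|
    le_iSup_of_le _ <| le_iSup_of_le ⟨z, rfl, hz⟩ le_rfl

theorem fdist_add_add_le (x v w : Multiset G) :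
    fdist H (x + v) (x + w) ≤ max (Multiset.card v) (Multiset.card w) :=
  Nat.sInf_le ⟨x, x, v, w, rfl, rfl, Multiset.rel_refl_of_refl_on fun y _ ↦ HAssoc.refl y, le_rfl⟩

theorem exists_isFactorization_of_forall_card_le (n : ℕ) {a : G} (ha : a ∈ nonUnits H)
    (hbd : ∀ s : Multiset G, (∀ x ∈ s, x ∈ nonUnits H) → a = s.prod → Multiset.card s ≤ n) :
    ∃ z, IsFactorization H a z := by
  induction n generalizing a with
  | zero => simpa using hbd {a} (by simpa using ha) (by simp)
  | succ n ih =>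
    by_cases hat : IsHAtom H a
    · exact ⟨{a}, hat.isFactorization_singleton⟩
    obtain ⟨b, hb, c, hc, rfl⟩ := exists_mul_eq_of_not_isHAtom ha hat
    obtain ⟨zb, hzb⟩ := ih hb fun s hs hsb ↦ by
      simpa using hbd (c ::ₘ s) (Multiset.forall_mem_cons.mpr ⟨hc, hs⟩)
        (by rw [Multiset.prod_cons, ← hsb, mul_comm])
    obtain ⟨zc, hzc⟩ := ih hc fun s hs hsc ↦ by
      simpa using hbd (b ::ₘ s) (Multiset.forall_mem_cons.mpr ⟨hb, hs⟩)
        (by rw [Multiset.prod_cons, ← hsc])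
    exact ⟨zb + zc, hzb.add hzc⟩

theorem IsStronglyPrimary.exists_prod_eq_mul_of_card_eq (hsp : IsStronglyPrimary H) {a : G}
    (ha : a ∈ nonUnits H) : ∃ n, ∀ t : Multiset G, (∀ x ∈ t, x ∈ nonUnits H) →
      Multiset.card t = n → ∃ c ∈ H, t.prod = a * c := by
  obtain ⟨n, -, hsub⟩ := hsp.2 a ha
  refine ⟨n, fun t ht hcard ↦ ?_⟩
  obtain ⟨c, hc, hct⟩ := hsub (hcard ▸ Multiset.prod_mem_pow_card ht)
  exact ⟨c, hc, hct.symm⟩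

theorem IsStronglyPrimary.exists_card_le_of_eq_prod (hsp : IsStronglyPrimary H) {a : G}
    (ha : a ∈ nonUnits H) : ∃ n, ∀ s : Multiset G, (∀ x ∈ s, x ∈ nonUnits H) →
      a = s.prod → Multiset.card s ≤ n := by
  classical
  obtain ⟨n, hn⟩ := hsp.exists_prod_eq_mul_of_card_eq ha
  refine ⟨n, fun s hs hprod ↦ ?_⟩
  by_contra! hlt
  obtain ⟨t, hts, htn⟩ := Multiset.exists_le_card_eq_of_le hlt.le
  obtain ⟨c, hc, htc⟩ := hn t (fun x hx ↦ hs x (Multiset.mem_of_le hts hx)) htn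
  -- `a = (s - t).prod * (a * c)`, so the non-unit `(s - t).prod * c` would be `1`
  have hrest : (s - t).prod * c = 1 := by
    refine mul_left_cancel (a := a) ?_
    rw [mul_one, mul_left_comm, ← htc, ← Multiset.prod_add, tsub_add_cancel_of_le hts, hprod]
  have hne : s - t ≠ 0 := by
    rw [← Multiset.card_pos, Multiset.card_sub hts]
    omega
  have hs_t : ∀ x ∈ s - t, x ∈ nonUnits H := fun x hx ↦
    hs x (Multiset.mem_of_le (s.sub_le_self t) hx)
  exact one_notMem_nonUnits (hrest ▸ mul_mem_nonUnits (multiset_prod_mem_nonUnits hs_t hne) hc)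

theorem IsStronglyPrimary.exists_isFactorization (hsp : IsStronglyPrimary H) {a : G}
    (ha : a ∈ H) : ∃ z, IsFactorization H a z := by
  by_cases hu : IsHUnit H a
  · exact ⟨0, by simp, by simpa [HAssoc] using hu⟩
  have ha' := mem_nonUnits_of_not_isHUnit ha hu
  obtain ⟨n, hn⟩ := hsp.exists_card_le_of_eq_prod ha'
  exact exists_isFactorization_of_forall_card_le n ha' hn

theorem IsStronglyPrimary.exists_omegaBound (hsp : IsStronglyPrimary H) {a : G}
    (ha : a ∈ nonUnits H) : ∃ n, OmegaBound H a n := by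
  classical
  obtain ⟨n, hn⟩ := hsp.exists_prod_eq_mul_of_card_eq ha
  refine ⟨n, fun s hs ⟨c, hc, hsc⟩ ↦ ?_⟩
  set s₁ := s.filter (· ∈ nonUnits H)
  by_cases hcard : n ≤ Multiset.card s₁
  · obtain ⟨t, hts, htn⟩ := Multiset.exists_le_card_eq_of_le hcard
    exact ⟨t, hts.trans (Multiset.filter_le _ s), htn.le,
      hn t (fun x hx ↦ Multiset.of_mem_filter (Multiset.mem_of_le hts hx)) htn⟩
  set s₂ := s.filter (· ∉ nonUnits H)
  have hsplit : s₁.prod * s₂.prod = s.prod := by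
    rw [← Multiset.prod_add, Multiset.filter_add_not]
  have hs₂ : IsHUnit H s₂.prod := isHUnit_multiset_prod fun x hx ↦ by
    have hxH := hs x (Multiset.mem_of_le (Multiset.filter_le _ s) hx)
    exact ⟨hxH, by_contra fun h ↦ Multiset.of_mem_filter hx ⟨hxH, h⟩⟩
  refine ⟨s₁, Multiset.filter_le _ s, by omega, c * s₂.prod⁻¹, H.mul_mem hc hs₂.2, ?_⟩
  rw [← mul_assoc, ← hsc, ← hsplit, mul_inv_cancel_right]

theorem tameBound_of_omegaBound (hfac : ∀ c ∈ H, ∃ z, IsFactorization H c z) {u : G}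
    (hu : IsHAtom H u) {ω R : ℕ} (hω : OmegaBound H u ω) (hR : rho H ω ≤ R) :
    TameBound H u R := by
  classical
  intro a _ ⟨b, hb, hab⟩ z hz
  have hdvd : ∃ c ∈ H, z.prod = u * c :=
    ⟨b * (a / z.prod)⁻¹, H.mul_mem hb hz.2.2, by rw [hab, inv_div, ← mul_assoc, mul_div_cancel]⟩
  obtain ⟨t, hts, htω, c, hc, htc⟩ := hω z (fun v hv ↦ (hz.1 v hv).1) hdvd
  obtain ⟨zc, hzc⟩ := hfac c hc
  have ht : IsFactorization H t.prod t :=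
    isFactorization_prod fun v hv ↦ hz.1 v (Multiset.mem_of_le hts hv)
  have huzc : IsFactorization H t.prod ({u} + zc) :=
    htc ▸ hu.isFactorization_singleton.add hzc
  have hlen : Multiset.card ({u} + zc) ≤ R := by
    have := card_le_rho (huzc.add (isFactorization_replicate hu (ω - Multiset.card t)))
      (ht.add (isFactorization_replicate hu (ω - Multiset.card t)))
    simp only [Multiset.card_add, Multiset.card_replicate] at this ⊢
    rw [Nat.add_sub_cancel' htω] at this
    have := this.trans hR
    norm_cast at this
    omega
  have hωR : ω ≤ R := by
    have := card_le_rho (isFactorization_replicate hu ω) (isFactorization_replicate hu ω)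
    rw [Multiset.card_replicate] at this
    exact_mod_cast this.trans hR
  refine ⟨(z - t) + ({u} + zc), ?_, ⟨u, by simp, HAssoc.refl u⟩, ?_⟩
  · refine IsFactorization.of_hAssoc ?_ ((isFactorization_prod fun v hv ↦
      hz.1 v (Multiset.mem_of_le (z.sub_le_self t) hv)).add huzc)
    rw [← Multiset.prod_add, tsub_add_cancel_of_le hts]
    exact hz.2
  · calc fdist H z (z - t + ({u} + zc))
        = fdist H (z - t + t) (z - t + ({u} + zc)) := by rw [tsub_add_cancel_of_le hts]
      _ ≤ max (Multiset.card t) (Multiset.card ({u} + zc)) := fdist_add_add_le _ _ _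
      _ ≤ R := max_le (htω.trans hωR) hlen

theorem tameDeg_le_rho_omegaDeg (hfac : ∀ c ∈ H, ∃ z, IsFactorization H c z) {u : G}
    (hu : IsHAtom H u) (hω : ∃ n, OmegaBound H u n) :
    tameDeg H u ≤ rho H (omegaDeg H u) := by
  classical
  rw [omegaDeg, sInf_setOf_natCast_eq_find hω]
  cases hR : rho H (Nat.find hω) using ENat.recTopCoe with
  | top => exact le_top
  | coe R => exact sInf_le ⟨R, tameBound_of_omegaBound hfac hu (Nat.find_spec hω) hR.le, rfl⟩

end SubmonoidOfCommGroup

theorem stmt12_general {G : Type*} [CommGroup G] (H : Submonoid G)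
    (hsp : IsStronglyPrimary H) :
    (∀ u : G, IsHAtom H u → tameDeg H u ≤ rho H (omegaDeg H u)) ∧
    ((∀ u : G, IsHAtom H u → rho H (omegaDeg H u) < ⊤) → LocallyTame H) := by
  have htame (u : G) (hu : IsHAtom H u) : tameDeg H u ≤ rho H (omegaDeg H u) :=
    tameDeg_le_rho_omegaDeg (fun _ hc ↦ hsp.exists_isFactorization hc) hu
      (hsp.exists_omegaBound hu.mem_nonUnits)
  exact ⟨htame, fun hfin u hu ↦
    exists_of_sInf_setOf_natCast_ne_top ((htame u hu).trans_lt (hfin u hu)).ne⟩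

/-- Let `H` be a strongly primary monoid. For every atom `u ∈ H` we
have `t(u) ≤ ρ_{ω(u)}(H)`; hence if `ρ_{ω(u)}(H) < ∞` for every atom `u`, then `H` is
locally tame. -/
theorem stmt12 {G : Type*} [CommGroup G] (H : Submonoid G) (hq : IsQuotientGroup H)
    (hsp : IsStronglyPrimary H) :
    (∀ u : G, IsHAtom H u → tameDeg H u ≤ rho H (omegaDeg H u)) ∧
    ((∀ u : G, IsHAtom H u → rho H (omegaDeg H u) < ⊤) → LocallyTame H) :=
  stmt12_general H hsp
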